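/- Let n, k_0 ≥ 1, k_i ≥ 1 be integers, let X_0 be an n×k_0 real matrix and X_i an n×k_i real matrix, and let h : ℝ^{k_i} → [0,∞) be a probability density. Define, for β_0 ∈ ℝ^{k_0} and σ > 0, f(y | β_0, σ) = ∫_{ℝ^{k_i}} N_n(y | X_0 β_0 + X_i β, σ² I_n) · σ^{−k_i} h(β/σ) dβ. Then for every c > 0, b ∈ ℝ^{k_0}, y ∈ ℝⁿ, β_0 ∈ ℝ^{k_0} and σ > 0: f(c·y + X_0 b | b + c·β_0, c·σ) = c^{−n} · f(y | β_0, σ). -/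
import Mathlib


open MeasureTheory Filter Topology Real Matrix

/-- The multivariate normal density `N_n(y | μ, σ² I_n)` on `ℝⁿ`. -/
noncomputable def isoNormalDensity {n : ℕ} (y μ : Fin n → ℝ) (σ : ℝ) : ℝ :=
  (2 * Real.pi * σ ^ 2) ^ (-(n : ℝ) / 2) *
    Real.exp (-(∑ j, (y j - μ j) ^ 2) / (2 * σ ^ 2))

/-- The marginal model obtained by integrating out the model-specific
parameters with the scale-form conditional prior `σ^{-k_i} h(β/σ)`. -/
noncomputable def marginalModel {n k0 ki : ℕ}
    (X0 : Matrix (Fin n) (Fin k0) ℝ) (Xi : Matrix (Fin n) (Fin ki) ℝ)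
    (h : (Fin ki → ℝ) → ℝ) (y : Fin n → ℝ) (β0 : Fin k0 → ℝ) (σ : ℝ) : ℝ :=
  ∫ β : Fin ki → ℝ,
    isoNormalDensity y (X0 *ᵥ β0 + Xi *ᵥ β) σ * (σ ^ (-(ki : ℝ)) * h (σ⁻¹ • β))

/-- Sufficiency direction of Result 1 of the paper: a scale-form conditional
prior makes the marginal model invariant under the location-scale group
`y ↦ c y + X₀ b`, `(β₀, σ) ↦ (b + c β₀, c σ)`. -/
theorem marginalModel_locationScale_invariant
    (n k0 ki : ℕ) (hn : 1 ≤ n) (hk0 : 1 ≤ k0) (hki : 1 ≤ ki)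
    (X0 : Matrix (Fin n) (Fin k0) ℝ) (Xi : Matrix (Fin n) (Fin ki) ℝ)
    (h : (Fin ki → ℝ) → ℝ) (hpos : ∀ u, 0 ≤ h u) (hmeas : Measurable h)
    (hprob : ∫ u : Fin ki → ℝ, h u = 1) :
    ∀ c : ℝ, 0 < c → ∀ b : Fin k0 → ℝ, ∀ y : Fin n → ℝ,
      ∀ β0 : Fin k0 → ℝ, ∀ σ : ℝ, 0 < σ →
        marginalModel X0 Xi h (c • y + X0 *ᵥ b) (b + c • β0) (c * σ) =
          c ^ (-(n : ℝ)) * marginalModel X0 Xi h y β0 σ := by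
  intro c hc b y β0 σ hσ
  have hc0 : c ≠ 0 := hc.ne'
  have hσ0 : σ ≠ 0 := hσ.ne'
  set F : (Fin ki → ℝ) → ℝ := fun β =>
    isoNormalDensity (c • y + X0 *ᵥ b) (X0 *ᵥ (b + c • β0) + Xi *ᵥ β) (c * σ) *
      ((c * σ) ^ (-(ki : ℝ)) * h ((c * σ)⁻¹ • β)) with hF
  have key : ∀ β : Fin ki → ℝ,
      F (c • β) = (c ^ (-(n : ℝ)) * (c ^ ki)⁻¹) *
        (isoNormalDensity y (X0 *ᵥ β0 + Xi *ᵥ β) σ * (σ ^ (-(ki : ℝ)) * h (σ⁻¹ • β))) := by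
    intro β
    have harg : (c * σ)⁻¹ • (c • β) = σ⁻¹ • β := by
      rw [smul_smul]
      congr 1
      field_simp
    have hsum : ∑ j, ((c • y + X0 *ᵥ b) j - (X0 *ᵥ (b + c • β0) + Xi *ᵥ (c • β)) j) ^ 2
        = c ^ 2 * ∑ j, (y j - (X0 *ᵥ β0 + Xi *ᵥ β) j) ^ 2 := by
      rw [Finset.mul_sum]
      apply Finset.sum_congr rfl
      intro j _
      have h1 : (X0 *ᵥ (b + c • β0)) j = (X0 *ᵥ b) j + c * (X0 *ᵥ β0) j := by
        rw [Matrix.mulVec_add, Matrix.mulVec_smul]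
        simp [Pi.add_apply]
      have h2 : (Xi *ᵥ (c • β)) j = c * (Xi *ᵥ β) j := by
        rw [Matrix.mulVec_smul]; simp
      simp only [Pi.add_apply, Pi.smul_apply, smul_eq_mul, h1, h2]
      ring
    have hden : (2 * Real.pi * (c * σ) ^ 2) ^ (-(n : ℝ) / 2)
        = c ^ (-(n : ℝ)) * (2 * Real.pi * σ ^ 2) ^ (-(n : ℝ) / 2) := by
      have h2π : (0:ℝ) ≤ 2 * Real.pi * σ ^ 2 := by positivity
      have : 2 * Real.pi * (c * σ) ^ 2 = c ^ 2 * (2 * Real.pi * σ ^ 2) := by ring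
      rw [this, Real.mul_rpow (by positivity) h2π]
      congr 1
      rw [← Real.rpow_natCast c 2, ← Real.rpow_mul hc.le]
      congr 1
      push_cast
      ring
    have hexp : Real.exp (-(∑ j, ((c • y + X0 *ᵥ b) j - (X0 *ᵥ (b + c • β0) + Xi *ᵥ (c • β)) j) ^ 2) / (2 * (c * σ) ^ 2))
        = Real.exp (-(∑ j, (y j - (X0 *ᵥ β0 + Xi *ᵥ β) j) ^ 2) / (2 * σ ^ 2)) := by
      congr 1
      rw [hsum]
      field_simp
    have hprior : ((c * σ) : ℝ) ^ (-(ki : ℝ)) = (c ^ ki)⁻¹ * σ ^ (-(ki : ℝ)) := by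
      rw [Real.mul_rpow hc.le hσ.le]
      congr 1
      rw [Real.rpow_neg hc.le, Real.rpow_natCast]
    simp only [hF, isoNormalDensity, hden, hexp, hprior, harg]
    ring
  have hfr : Module.finrank ℝ (Fin ki → ℝ) = ki := Module.finrank_fin_fun ℝ
  have e1 : ∫ β : Fin ki → ℝ, F (c • β) = (c ^ ki)⁻¹ • ∫ β, F β :=
    (MeasureTheory.Measure.integral_comp_smul_of_nonneg volume F c (hR := hc.le)).trans (by rw [hfr])
  have e2 : ∫ β : Fin ki → ℝ, F (c • β)
      = (c ^ (-(n : ℝ)) * (c ^ ki)⁻¹) * marginalModel X0 Xi h y β0 σ := by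
    simp_rw [key]
    rw [MeasureTheory.integral_const_mul]
    rfl
  have hck : (c : ℝ) ^ ki ≠ 0 := pow_ne_zero _ hc0
  have : marginalModel X0 Xi h (c • y + X0 *ᵥ b) (b + c • β0) (c * σ) = ∫ β, F β := rfl
  rw [this]
  have := e1.symm.trans e2
  rw [smul_eq_mul] at this
  field_simp at this ⊢
  linarith [this]
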